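/- Let T be a thick tree with loops with sink s. The map φ : G → ∏_{j ∈ V₀} ℤ/e_{j,p(j)}ℤ defined by φ(u)_j = ∑_{i ⪰ j} u_i (mod e_{j,p(j)}) is a group isomorphism from the sandpile group G onto the direct product ∏_{j ∈ V₀} ℤ/e_{j,p(j)}ℤ. -/

import Mathlib

namespace SandpilePaper

variable {V : Type*} [Fintype V] [DecidableEq V]

/-- Configurations: assignments of numbers of grains to ordinary (non-sink) vertices. -/
abbrev Conf (s : V) : Type _ := {i : V // i ≠ s} → ℕ

/-- The degree of a vertex: `deg i = ∑ j, e i j`. -/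
def deg (e : V → V → ℕ) (i : V) : ℕ := ∑ j, e i j

/-- Toppling the (unstable) vertex `i`. -/
def toppleAt (e : V → V → ℕ) (s : V) (i : {i : V // i ≠ s}) (u : Conf s) : Conf s :=
  fun j => if j = i then u i - deg e i.1 + e i.1 i.1 else u j + e i.1 j.1

/-- One toppling step: some unstable vertex topples. -/
def Topple (e : V → V → ℕ) (s : V) (u v : Conf s) : Prop :=
  ∃ i : {i : V // i ≠ s}, deg e i.1 ≤ u i ∧ v = toppleAt e s i u

/-- A configuration is stable if every ordinary vertex has fewer grains than its degree. -/
def Stable (e : V → V → ℕ) (s : V) (u : Conf s) : Prop :=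
  ∀ j : {i : V // i ≠ s}, u j < deg e j.1

/-- The underlying simple graph: edges between distinct vertices with positive multiplicity. -/
def graph (e : V → V → ℕ) : SimpleGraph V := SimpleGraph.fromRel fun i j => 0 < e i j

/-- `σ` is a stabilization map: `σ u` is stable and reached from `u` by finitely many topplings. -/
def IsStabilization (e : V → V → ℕ) (s : V) (σ : Conf s → Conf s) : Prop :=
  ∀ u, Stable e s (σ u) ∧ Relation.ReflTransGen (Topple e s) u (σ u)

/-- A stable configuration `u` is recurrent if every configuration can reach it. -/
def Recurrent (e : V → V → ℕ) (s : V) (σ : Conf s → Conf s) (u : Conf s) : Prop :=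
  Stable e s u ∧ ∀ v : Conf s, ∃ w : Conf s, σ (v + w) = u

/-- Apply a sequence of topplings. -/
def applySeq (e : V → V → ℕ) (s : V) (u : Conf s) : List {i : V // i ≠ s} → Conf s
  | [] => u
  | i :: L => applySeq e s (toppleAt e s i u) L

/-- A toppling sequence is valid if each toppled vertex is unstable when toppled. -/
def ValidSeq (e : V → V → ℕ) (s : V) (u : Conf s) : List {i : V // i ≠ s} → Prop
  | [] => True
  | i :: L => deg e i.1 ≤ u i ∧ ValidSeq e s (toppleAt e s i u) L

/-- `succeq e s i j` means `i ⪰ j`: `j` lies on the unique path from `i` to the sink `s`. -/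
def succeq (e : V → V → ℕ) (s i j : V) : Prop :=
  (graph e).dist i s = (graph e).dist i j + (graph e).dist j s

noncomputable instance (e : V → V → ℕ) (s i j : V) : Decidable (succeq e s i j) := Nat.decEq _ _

/-- `p` assigns to each ordinary vertex its parent: its neighbor on the path to the sink. -/
def IsParent (e : V → V → ℕ) (s : V) (p : {i : V // i ≠ s} → V) : Prop :=
  ∀ j : {i : V // i ≠ s}, (graph e).Adj j.1 (p j) ∧
    (graph e).dist (p j) s + 1 = (graph e).dist j.1 s

/-- The set `{i : i ⪰ j}`. -/
noncomputable def descendants (e : V → V → ℕ) (s : V) (j : {i : V // i ≠ s}) :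
    Finset {i : V // i ≠ s} :=
  Finset.univ.filter fun i => succeq e s i.1 j.1

/-- The set `{i : i ≻ j}`. -/
noncomputable def strictDescendants (e : V → V → ℕ) (s : V) (j : {i : V // i ≠ s}) :
    Finset {i : V // i ≠ s} :=
  Finset.univ.filter fun i => i ≠ j ∧ succeq e s i.1 j.1

/-- `j` is a leaf: its parent is its only neighbor in the underlying tree. -/
def IsLeaf (e : V → V → ℕ) (s : V) (p : {i : V // i ≠ s} → V) (j : {i : V // i ≠ s}) : Prop :=
  ∀ k : V, (graph e).Adj j.1 k → k = p j

/-- Rows of the toppling matrix `Δ`. -/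
def deltaRow (e : V → V → ℕ) (s : V) (i j : {i : V // i ≠ s}) : ℤ :=
  if i = j then (deg e i.1 : ℤ) - (e i.1 i.1 : ℤ) else -(e i.1 j.1 : ℤ)

/-- The lattice `Λ` spanned by the rows of the toppling matrix. -/
def lattice (e : V → V → ℕ) (s : V) : AddSubgroup ({i : V // i ≠ s} → ℤ) :=
  AddSubgroup.closure (Set.range (deltaRow e s))

/-- The map `φ(u)_j = ∑_{i ⪰ j} u_i (mod e_{j,p(j)})`. -/
noncomputable def phi (e : V → V → ℕ) (s : V) (p : {i : V // i ≠ s} → V) (u : Conf s)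
    (j : {i : V // i ≠ s}) : ZMod (e j.1 (p j)) :=
  ∑ i ∈ descendants e s j, (u i : ZMod (e j.1 (p j)))

/-- The map `φ` on integer vectors. -/
noncomputable def phiZ (e : V → V → ℕ) (s : V) (p : {i : V // i ≠ s} → V) (u : {i : V // i ≠ s} → ℤ)
    (j : {i : V // i ≠ s}) : ZMod (e j.1 (p j)) :=
  ∑ i ∈ descendants e s j, (u i : ZMod (e j.1 (p j)))

end SandpilePaper

/-!
The recurrent configurations of a thick tree are the stable `u` with `deg j ≤ u_j + e_{j,p(j)}`
for all `j`. Necessity: stabilize a configuration in which every vertex is unstable; the vertex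
of the subtree of `j` whose last toppling comes first then receives grains from every other
vertex of the subtree, which leaves it stable only if it is `j` and `u_j` satisfies the bound.
Sufficiency: under the bound, adding `e_{j,p(j)}` grains at `j` sets off a wave that topples the
subtree of `j` once and passes the grains to `p(j)`, so grains added in suitable multiples are
swept into the sink and any configuration can be completed to one stabilizing to `u`.

The only edge leaving the subtree of `j` carries `e_{j,p(j)}` grains, so `φ` is invariant under
toppling, whence `φ(σ(u + v)) = φ(u) + φ(v)`. On recurrent configurations
`φ(u)_j = u_j + ∑_{i ≻ j} u_i` determines `u` from the leaves up, and both sides have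
`∏ e_{j,p(j)}` elements.
-/

open Relation

theorem _root_.SimpleGraph.Connected.exists_adj_dist_add_one {α : Type*} {G : SimpleGraph α}
    (hG : G.Connected) {x y : α} (hxy : x ≠ y) :
    ∃ z, G.Adj x z ∧ G.dist z y + 1 = G.dist x y := by
  obtain ⟨P, -, hP⟩ := hG.exists_path_of_dist x y
  cases P with
  | nil => exact absurd rfl hxy
  | @cons _ z _ h Q =>
    refine ⟨z, h, le_antisymm ?_ ?_⟩
    · have := G.dist_le Q
      rw [SimpleGraph.Walk.length_cons] at hP
      omega
    · have := hG.dist_triangle (u := x) (v := z) (w := y)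
      rw [SimpleGraph.dist_eq_one_iff_adj.2 h] at this
      omega

theorem _root_.SimpleGraph.IsTree.eq_of_adj_of_dist_add_one {α : Type*} {G : SimpleGraph α}
    (hG : G.IsTree) {s x y y' : α} (hy : G.Adj x y) (hy' : G.Adj x y')
    (hdy : G.dist y s + 1 = G.dist x s) (hdy' : G.dist y' s + 1 = G.dist x s) : y = y' := by
  classical
  obtain ⟨q, hq, -⟩ := hG.connected.exists_path_of_dist s x
  have mem : ∀ {z}, G.Adj x z → G.dist z s + 1 = G.dist x s → z = q.penultimate := by
    intro z hz hdz
    obtain ⟨r, hr, hrl⟩ := hG.connected.exists_path_of_dist s z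
    have hx : x ∉ r.support := fun hx => by
      have h1 := G.dist_le (r.takeUntil x hx)
      have h2 := r.length_takeUntil_le_length hx
      rw [SimpleGraph.dist_comm (u := x), SimpleGraph.dist_comm (u := z)] at hdz
      omega
    exact hG.isAcyclic.eq_penultimate_of_adj_end hq hz
      (hG.isAcyclic.mem_support_of_ne_mem_support_of_adj_of_isPath hq hr hz hx)
  exact (mem hy hdy).trans (mem hy' hdy').symm

namespace SandpilePaper

section Tree

variable {V : Type*} {e : V → V → ℕ} {s : V} {p : {i : V // i ≠ s} → V}

theorem graph_adj (hsym : ∀ i j : V, e i j = e j i) {i k : V} :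
    (graph e).Adj i k ↔ i ≠ k ∧ e i k ≠ 0 := by
  simp [graph, SimpleGraph.fromRel_adj, hsym k i, Nat.pos_iff_ne_zero]

theorem edge_parent_ne_zero (hsym : ∀ i j : V, e i j = e j i) (hp : IsParent e s p)
    (j : {i : V // i ≠ s}) : e j.1 (p j) ≠ 0 :=
  ((graph_adj hsym).1 (hp j).1).2

theorem eq_parent_of_adj (htree : (graph e).IsTree) (hp : IsParent e s p)
    {j : {i : V // i ≠ s}} {k : V} (hadj : (graph e).Adj j.1 k)
    (hk : (graph e).dist k s + 1 = (graph e).dist j.1 s) : k = p j :=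
  htree.eq_of_adj_of_dist_add_one hadj (hp j).1 hk (hp j).2

theorem eq_parent_or_parent_eq_of_adj (htree : (graph e).IsTree) (hp : IsParent e s p)
    {j : {i : V // i ≠ s}} {k : V} (hadj : (graph e).Adj j.1 k) :
    k = p j ∨ ∃ hk : k ≠ s, p ⟨k, hk⟩ = j.1 := by
  rcases htree.dist_eq_dist_add_one_of_adj s hadj with hjk | hkj <;>
    rw [SimpleGraph.dist_comm (u := s), SimpleGraph.dist_comm (u := s)] at *
  · exact Or.inl (eq_parent_of_adj htree hp hadj hjk.symm)
  · have hks : k ≠ s := by rintro rfl; simp at hkj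
    exact Or.inr ⟨hks, (eq_parent_of_adj htree hp (j := ⟨k, hks⟩) hadj.symm hkj.symm).symm⟩

theorem succeq_refl (j : V) : succeq e s j j := by
  simp [succeq]

theorem succeq_trans (htree : (graph e).IsTree) {i k j : V}
    (hik : succeq e s i k) (hkj : succeq e s k j) : succeq e s i j := by
  have t1 := htree.connected.dist_triangle (u := i) (v := k) (w := j)
  have t2 := htree.connected.dist_triangle (u := i) (v := j) (w := s)
  unfold succeq at *
  omega

theorem succeq_antisymm (htree : (graph e).IsTree) {i j : V}
    (hij : succeq e s i j) (hji : succeq e s j i) : i = j := by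
  have := SimpleGraph.dist_comm (G := graph e) (u := i) (v := j)
  unfold succeq at *
  exact htree.connected.dist_eq_zero_iff.1 (by omega)

theorem ne_sink_of_succeq (htree : (graph e).IsTree) {i j : V} (hj : j ≠ s)
    (h : succeq e s i j) : i ≠ s := by
  rintro rfl
  unfold succeq at h
  rw [SimpleGraph.dist_self] at h
  exact hj (htree.connected.dist_eq_zero_iff.1 (by omega))

theorem not_succeq_parent (hp : IsParent e s p) (j : {i : V // i ≠ s}) :
    ¬ succeq e s (p j) j.1 := by
  have := (hp j).2
  unfold succeq
  omega

theorem succeq_of_parent_succeq (htree : (graph e).IsTree) (hp : IsParent e s p)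
    {i : {i : V // i ≠ s}} {j : V} (h : succeq e s (p i) j) : succeq e s i.1 j := by
  have h1 := SimpleGraph.dist_eq_one_iff_adj.2 (hp i).1
  have t1 := htree.connected.dist_triangle (u := i.1) (v := p i) (w := j)
  have t2 := htree.connected.dist_triangle (u := i.1) (v := j) (w := s)
  have := (hp i).2
  unfold succeq at *
  omega

theorem parent_succeq_of_succeq (htree : (graph e).IsTree) (hp : IsParent e s p)
    {i : {i : V // i ≠ s}} {j : V} (h : succeq e s i.1 j) (hij : i.1 ≠ j) :
    succeq e s (p i) j := by
  obtain ⟨y, hy, hyj⟩ := htree.connected.exists_adj_dist_add_one hij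
  have t1 := htree.connected.dist_triangle (u := y) (v := j) (w := s)
  have t2 := htree.connected.dist_triangle (u := i.1) (v := y) (w := s)
  rw [SimpleGraph.dist_eq_one_iff_adj.2 hy] at t2
  unfold succeq at *
  obtain rfl : y = p i := eq_parent_of_adj htree hp hy (by omega)
  have := htree.connected.dist_triangle (u := p i) (v := j) (w := s)
  omega

theorem edge_out_of_subtree (hsym : ∀ i j : V, e i j = e j i) (htree : (graph e).IsTree)
    (hp : IsParent e s p) {i j : {i : V // i ≠ s}} {k : V}
    (hi : succeq e s i.1 j.1) (hk : ¬ succeq e s k j.1) (he : e i.1 k ≠ 0) : i = j ∧ k = p j := by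
  have hadj : (graph e).Adj i.1 k := (graph_adj hsym).2 ⟨by rintro rfl; exact hk hi, he⟩
  rcases eq_parent_or_parent_eq_of_adj htree hp hadj with rfl | ⟨hks, hki⟩
  · by_contra hne
    have hij : i ≠ j := fun h => hne ⟨h, h ▸ rfl⟩
    exact hk (parent_succeq_of_succeq htree hp hi (fun h => hij (Subtype.ext h)))
  · have hki' : succeq e s k i.1 := succeq_of_parent_succeq (i := ⟨k, hks⟩) htree hp (by
      rw [hki]; exact succeq_refl _)
    exact absurd (succeq_trans htree hki' hi) hk

end Tree

theorem _root_.Finset.sum_le_sum_map_of_forall_mem {α : Type*} [DecidableEq α] {T : Finset α}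
    {L : List α} (f : α → ℕ) (hT : ∀ x ∈ T, x ∈ L) : ∑ x ∈ T, f x ≤ (L.map f).sum := by
  rw [Finset.sum_list_map_count]
  calc ∑ x ∈ T, f x ≤ ∑ x ∈ L.toFinset, f x :=
        Finset.sum_le_sum_of_subset fun x hx => List.mem_toFinset.2 (hT x hx)
    _ ≤ ∑ x ∈ L.toFinset, L.count x • f x := Finset.sum_le_sum fun x hx =>
        Nat.le_mul_of_pos_left _ (List.count_pos_iff.2 (List.mem_toFinset.1 hx))

section Toppling

variable {V : Type*} [Fintype V] [DecidableEq V] {e : V → V → ℕ} {s : V}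

theorem le_toppleAt {x : Conf s} {i k : {i : V // i ≠ s}} (hki : k ≠ i) :
    x k ≤ toppleAt e s i x k := by
  simp [toppleAt, hki]

theorem toppleAt_comm {x : Conf s} {i j : {i : V // i ≠ s}} (hi : deg e i.1 ≤ x i)
    (hj : deg e j.1 ≤ x j) (hij : i ≠ j) :
    toppleAt e s i (toppleAt e s j x) = toppleAt e s j (toppleAt e s i x) := by
  funext k
  simp only [toppleAt]
  split_ifs <;> subst_vars <;> first | exact absurd rfl hij | omega

theorem toppleAt_add {x : Conf s} {i : {i : V // i ≠ s}} (hi : deg e i.1 ≤ x i) (d : Conf s) :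
    toppleAt e s i (x + d) = toppleAt e s i x + d := by
  funext k
  simp only [toppleAt, Pi.add_apply]
  split_ifs <;> subst_vars <;> omega

theorem Topple.add {x y : Conf s} (h : Topple e s x y) (d : Conf s) : Topple e s (x + d) (y + d) :=
  let ⟨i, hi, hy⟩ := h
  ⟨i, le_add_right hi, by rw [hy, toppleAt_add hi]⟩

theorem reach_add {x y : Conf s} (h : ReflTransGen (Topple e s) x y) (d : Conf s) :
    ReflTransGen (Topple e s) (x + d) (y + d) :=
  h.lift (· + d) fun _ _ h => h.add d

theorem Topple.diamond {x y z : Conf s} (hy : Topple e s x y) (hz : Topple e s x z) :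
    ∃ w, ReflGen (Topple e s) y w ∧ ReflTransGen (Topple e s) z w := by
  obtain ⟨i, hi, rfl⟩ := hy
  obtain ⟨j, hj, rfl⟩ := hz
  by_cases hij : i = j
  · subst hij
    exact ⟨_, ReflGen.refl, ReflTransGen.refl⟩
  refine ⟨toppleAt e s j (toppleAt e s i x), ReflGen.single ⟨j, ?_, rfl⟩, .single ⟨i, ?_, ?_⟩⟩
  · exact hj.trans (le_toppleAt (Ne.symm hij))
  · exact hi.trans (le_toppleAt hij)
  · exact toppleAt_comm hj hi (Ne.symm hij)

theorem eq_of_reach_of_stable {x y : Conf s} (hx : Stable e s x)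
    (h : ReflTransGen (Topple e s) x y) : x = y := by
  rcases ReflTransGen.cases_head_iff.1 h with hxy | ⟨_, ⟨i, hi, -⟩, -⟩
  · exact hxy
  · exact absurd (hx i) (not_lt.2 hi)

theorem stabilization_eq {σ : Conf s → Conf s} (hσ : IsStabilization e s σ) {x y : Conf s}
    (h : ReflTransGen (Topple e s) x y) (hy : Stable e s y) : σ x = y := by
  obtain ⟨w, hσw, hyw⟩ := church_rosser (fun _ _ _ => Topple.diamond) (hσ x).2 h
  rw [eq_of_reach_of_stable (hσ x).1 hσw, eq_of_reach_of_stable hy hyw]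

theorem exists_validSeq_of_reach {x y : Conf s} (h : ReflTransGen (Topple e s) x y) :
    ∃ L, ValidSeq e s x L ∧ applySeq e s x L = y := by
  induction h using ReflTransGen.head_induction_on with
  | refl => exact ⟨[], trivial, rfl⟩
  | head hstep _ ih =>
    obtain ⟨i, hi, rfl⟩ := hstep
    obtain ⟨L, hL, rfl⟩ := ih
    exact ⟨i :: L, ⟨hi, hL⟩, rfl⟩

theorem applySeq_apply_of_not_mem {x : Conf s} {L : List {i : V // i ≠ s}}
    {i : {i : V // i ≠ s}} (h : i ∉ L) :
    applySeq e s x L i = x i + (L.map fun k => e k.1 i.1).sum := by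
  induction L generalizing x with
  | nil => simp [applySeq]
  | cons a L ih =>
    rw [List.mem_cons, not_or] at h
    simp only [applySeq, ih h.2, toppleAt, if_neg h.1, List.map_cons, List.sum_cons]
    omega

theorem mem_of_validSeq_of_unstable {x : Conf s} {L : List {i : V // i ≠ s}}
    {i : {i : V // i ≠ s}} (hL : ValidSeq e s x L) (hst : Stable e s (applySeq e s x L))
    (hi : deg e i.1 ≤ x i) : i ∈ L := by
  induction L generalizing x with
  | nil => exact absurd (hst i) (not_lt.2 hi)
  | cons a L ih =>
    by_cases hia : i = a
    · exact hia ▸ List.mem_cons_self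
    · exact List.mem_cons_of_mem a (ih hL.2 hst (hi.trans (le_toppleAt hia)))

/-- The vertex of `A` whose last toppling comes first keeps the grains sent to it afterwards by
every other vertex of `A`. -/
theorem exists_sum_le_applySeq {x : Conf s} {L : List {i : V // i ≠ s}} (hL : ValidSeq e s x L)
    {A : Finset {i : V // i ≠ s}} (hA : A.Nonempty) (hAL : ∀ i ∈ A, i ∈ L) :
    ∃ i ∈ A, ∑ k ∈ A, e k.1 i.1 ≤ applySeq e s x L i := by
  induction L generalizing x with
  | nil => obtain ⟨i, hi⟩ := hA; exact absurd (hAL i hi) List.not_mem_nil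
  | cons a L ih =>
    by_cases ha : a ∈ A ∧ a ∉ L
    · refine ⟨a, ha.1, ?_⟩
      have hrest : ∑ k ∈ A.erase a, e k.1 a.1 ≤ (L.map fun k => e k.1 a.1).sum :=
        Finset.sum_le_sum_map_of_forall_mem _ fun k hk =>
          (List.mem_cons.1 (hAL k (Finset.mem_of_mem_erase hk))).resolve_left
            (Finset.ne_of_mem_erase hk)
      rw [← Finset.add_sum_erase _ _ ha.1]
      simp only [applySeq, applySeq_apply_of_not_mem ha.2, toppleAt, ↓reduceIte]
      omega
    · refine ih hL.2 fun i hi => ?_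
      rcases List.mem_cons.1 (hAL i hi) with rfl | h
      · exact not_not.1 (not_and.1 ha hi)
      · exact h

end Toppling

section Descendants

variable {V : Type*} [Fintype V] [DecidableEq V] {e : V → V → ℕ} {s : V}
  {p : {i : V // i ≠ s} → V}

theorem mem_descendants {i j : {i : V // i ≠ s}} :
    i ∈ descendants e s j ↔ succeq e s i.1 j.1 := by
  simp [descendants]

theorem self_mem_descendants (j : {i : V // i ≠ s}) : j ∈ descendants e s j :=
  mem_descendants.2 (succeq_refl _)

theorem card_descendants_lt (htree : (graph e).IsTree) {i j : {i : V // i ≠ s}}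
    (hij : succeq e s i.1 j.1) (hne : i ≠ j) :
    (descendants e s i).card < (descendants e s j).card :=
  Finset.card_lt_card
    ⟨fun _ hk => mem_descendants.2 (succeq_trans htree (mem_descendants.1 hk) hij), fun h =>
      hne (Subtype.ext
        (succeq_antisymm htree hij (mem_descendants.1 (h (self_mem_descendants j)))))⟩

theorem sum_descendants_eq_sum_filter (htree : (graph e).IsTree) {M : Type*} [AddCommMonoid M]
    (j : {i : V // i ≠ s}) (f : V → M) :
    ∑ k ∈ descendants e s j, f k.1 = ∑ k with succeq e s k j.1, f k := by
  have hmap : (Finset.univ.filter fun k => succeq e s k j.1) =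
      (descendants e s j).map (Function.Embedding.subtype _) := by
    ext k
    simpa [descendants] using fun h => ne_sink_of_succeq htree j.2 h
  rw [hmap, Finset.sum_map]
  rfl

theorem deg_eq_sum_descendants_add (hsym : ∀ i j : V, e i j = e j i) (htree : (graph e).IsTree)
    (hp : IsParent e s p) {i j : {i : V // i ≠ s}} (hi : i ∈ descendants e s j) :
    deg e i.1 = ∑ k ∈ descendants e s j, e i.1 k.1 + if i = j then e j.1 (p j) else 0 := by
  rw [deg, ← Finset.sum_filter_add_sum_filter_not _ (fun k => succeq e s k j.1),
    sum_descendants_eq_sum_filter htree]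
  congr 1
  split_ifs with hij
  · subst hij
    refine Finset.sum_eq_single_of_mem (p i) (by simp [not_succeq_parent hp]) fun k hk hkp => ?_
    by_contra he
    exact hkp (edge_out_of_subtree hsym htree hp (mem_descendants.1 hi)
      (Finset.mem_filter.1 hk).2 he).2
  · refine Finset.sum_eq_zero fun k hk => ?_
    by_contra he
    exact hij (edge_out_of_subtree hsym htree hp (mem_descendants.1 hi)
      (Finset.mem_filter.1 hk).2 he).1

def children (p : {i : V // i ≠ s} → V) (j : {i : V // i ≠ s}) : Finset {i : V // i ≠ s} :=
  Finset.univ.filter fun c => p c = j.1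

theorem mem_children {p : {i : V // i ≠ s} → V} {c j : {i : V // i ≠ s}} :
    c ∈ children p j ↔ p c = j.1 := by
  simp [children]

theorem children_subset (htree : (graph e).IsTree) (hp : IsParent e s p) (j : {i : V // i ≠ s}) :
    children p j ⊆ (descendants e s j).erase j := fun c hc => by
  have hpc := mem_children.1 hc
  refine Finset.mem_erase.2 ⟨?_, mem_descendants.2 (succeq_of_parent_succeq htree hp ?_)⟩
  · rintro rfl
    exact (hp c).1.ne' hpc
  · rw [hpc]
    exact succeq_refl _

theorem descendants_subset_of_mem_children (htree : (graph e).IsTree) (hp : IsParent e s p)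
    {c j : {i : V // i ≠ s}} (hc : c ∈ children p j) :
    descendants e s c ⊆ (descendants e s j).erase j := fun i hi => by
  obtain ⟨hcj, hc'⟩ := Finset.mem_erase.1 (children_subset htree hp j hc)
  have hij := succeq_trans htree (mem_descendants.1 hi) (mem_descendants.1 hc')
  refine Finset.mem_erase.2 ⟨?_, mem_descendants.2 hij⟩
  rintro rfl
  exact hcj (Subtype.ext (succeq_antisymm htree (mem_descendants.1 hc') (mem_descendants.1 hi)))

theorem edge_eq_parent_add_children (hsym : ∀ i j : V, e i j = e j i)
    (htree : (graph e).IsTree) (hp : IsParent e s p) {j k : {i : V // i ≠ s}} (hkj : k ≠ j) :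
    e j.1 k.1 = (if k.1 = p j then e j.1 (p j) else 0) +
      if k ∈ children p j then e k.1 j.1 else 0 := by
  by_cases hkp : k.1 = p j
  · have hk : k ∉ children p j := fun hk => by
      have h1 := (hp j).2
      have h2 := (hp k).2
      rw [mem_children.1 hk] at h2
      rw [← hkp] at h1
      omega
    simp [hkp, hk]
  by_cases hk : k ∈ children p j
  · simp [hkp, hk, hsym j.1]
  simp only [hkp, hk, if_false, add_zero]
  by_contra he
  rcases eq_parent_or_parent_eq_of_adj htree hp
    ((graph_adj hsym).2 ⟨fun h => hkj (Subtype.ext h).symm, he⟩) with h | ⟨_, h⟩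
  · exact hkp h
  · exact hk (mem_children.2 h)

theorem deg_eq_add_sum_children (hsym : ∀ i j : V, e i j = e j i) (htree : (graph e).IsTree)
    (hp : IsParent e s p) (j : {i : V // i ≠ s}) :
    deg e j.1 = e j.1 j.1 + e j.1 (p j) + ∑ c ∈ children p j, e j.1 c.1 := by
  have hdeg := deg_eq_sum_descendants_add hsym htree hp (self_mem_descendants j)
  rw [if_pos rfl, ← Finset.add_sum_erase _ _ (self_mem_descendants j)] at hdeg
  have hsub : ∑ c ∈ children p j, e j.1 c.1 = ∑ k ∈ (descendants e s j).erase j, e j.1 k.1 := by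
    refine Finset.sum_subset (children_subset htree hp j) fun k hk hkc => ?_
    obtain ⟨hkj, hk⟩ := Finset.mem_erase.1 hk
    rw [edge_eq_parent_add_children hsym htree hp hkj, if_neg hkc, add_zero, ite_eq_right_iff]
    intro hkp
    exact absurd (hkp ▸ mem_descendants.1 hk) (not_succeq_parent hp j)
  omega

/-- Modulo `e_{j,p(j)}`, toppling `i` moves no grains into or out of the subtree of `j`. -/
theorem sum_edges_descendants (hsym : ∀ i j : V, e i j = e j i) (htree : (graph e).IsTree)
    (hp : IsParent e s p) (i j : {i : V // i ≠ s}) :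
    ∑ k ∈ descendants e s j, (e i.1 k.1 : ZMod (e j.1 (p j))) =
      if i ∈ descendants e s j then (deg e i.1 : ZMod (e j.1 (p j))) else 0 := by
  split_ifs with hi
  · rw [deg_eq_sum_descendants_add hsym htree hp hi]
    split_ifs with hij
    · simp [hij]
    · simp
  · refine Finset.sum_eq_zero fun k hk => ?_
    by_cases he : e k.1 i.1 = 0
    · rw [hsym i.1 k.1, he, Nat.cast_zero]
    obtain ⟨rfl, hik⟩ := edge_out_of_subtree hsym htree hp (mem_descendants.1 hk)
      (fun h => hi (mem_descendants.2 h)) he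
    rw [hik, hsym, ZMod.natCast_self]

theorem phi_add (u v : Conf s) : phi e s p (u + v) = phi e s p u + phi e s p v := by
  funext j
  simp only [phi, Pi.add_apply, Nat.cast_add, Finset.sum_add_distrib]

theorem phi_toppleAt (hsym : ∀ i j : V, e i j = e j i) (htree : (graph e).IsTree)
    (hp : IsParent e s p) {x : Conf s} {i : {i : V // i ≠ s}} (hi : deg e i.1 ≤ x i) :
    phi e s p (toppleAt e s i x) = phi e s p x := by
  funext j
  have hcast : ∀ k, ((toppleAt e s i x k : ℕ) : ZMod (e j.1 (p j))) =
      x k + e i.1 k.1 - if k = i then (deg e i.1 : ZMod (e j.1 (p j))) else 0 := by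
    intro k
    simp only [toppleAt]
    split_ifs with hk
    · subst hk
      push_cast [Nat.cast_sub hi]
      ring
    · simp
  simp only [phi, hcast, Finset.sum_sub_distrib, Finset.sum_add_distrib, Finset.sum_ite_eq',
    sum_edges_descendants hsym htree hp, add_sub_cancel_right]

theorem phi_eq_of_reach (hsym : ∀ i j : V, e i j = e j i) (htree : (graph e).IsTree)
    (hp : IsParent e s p) {x y : Conf s} (h : ReflTransGen (Topple e s) x y) :
    phi e s p y = phi e s p x := by
  induction h with
  | refl => rfl
  | tail _ hstep ih =>
    obtain ⟨i, hi, rfl⟩ := hstep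
    rw [phi_toppleAt hsym htree hp hi, ih]

theorem phi_stabilization (hsym : ∀ i j : V, e i j = e j i) (htree : (graph e).IsTree)
    (hp : IsParent e s p) {σ : Conf s → Conf s} (hσ : IsStabilization e s σ) (x : Conf s) :
    phi e s p (σ x) = phi e s p x :=
  phi_eq_of_reach hsym htree hp (hσ x).2

end Descendants

section Primed

variable {V : Type*} [Fintype V] {e : V → V → ℕ} {s : V} {p : {i : V // i ≠ s} → V}

theorem edge_le_deg (i k : V) : e i k ≤ deg e i :=
  Finset.single_le_sum (fun _ _ => Nat.zero_le _) (Finset.mem_univ k)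

/-- The `e_{i,p(i)}` grains that the parent of `i` sends when it topples make `i` unstable. -/
def Primed (e : V → V → ℕ) (s : V) (p : {i : V // i ≠ s} → V) (x : Conf s)
    (i : {i : V // i ≠ s}) : Prop :=
  deg e i.1 ≤ x i + e i.1 (p i)

theorem Primed.mono {x y : Conf s} {i : {i : V // i ≠ s}} (h : Primed e s p x i)
    (hxy : x i ≤ y i) : Primed e s p y i :=
  h.trans (Nat.add_le_add_right hxy _)

end Primed

section Grains

variable {V : Type*} [DecidableEq V] {s : V}

/-- `m` grains on the vertex `v`; placed on the sink they vanish. -/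
def grainsAt (s v : V) (m : ℕ) : Conf s := fun k => if k.1 = v then m else 0

theorem grainsAt_of_ne {v : V} (hv : v ≠ s) (m : ℕ) : grainsAt s v m = Pi.single ⟨v, hv⟩ m := by
  funext k
  simp [grainsAt, Pi.single_apply, Subtype.ext_iff]

theorem grainsAt_sink (m : ℕ) : grainsAt s s m = 0 := by
  funext k
  simp [grainsAt, k.2]

theorem grainsAt_zero (v : V) : grainsAt s v 0 = 0 := by
  funext k
  simp [grainsAt]

theorem grainsAt_add (v : V) (m n : ℕ) :
    grainsAt s v (m + n) = grainsAt s v m + grainsAt s v n := by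
  funext k
  simp only [grainsAt, Pi.add_apply]
  split_ifs <;> rfl

end Grains

section Recurrence

variable {V : Type*} [Fintype V] [DecidableEq V] {e : V → V → ℕ} {s : V}
  {p : {i : V // i ≠ s} → V}

theorem primed_of_recurrent (hsym : ∀ i j : V, e i j = e j i) (htree : (graph e).IsTree)
    (hp : IsParent e s p) {σ : Conf s → Conf s} (hσ : IsStabilization e s σ) {u : Conf s}
    (hu : Recurrent e s σ u) (j : {i : V // i ≠ s}) : Primed e s p u j := by
  obtain ⟨w, hw⟩ := hu.2 fun i => deg e i.1
  obtain ⟨L, hL, hLu⟩ := exists_validSeq_of_reach (hσ ((fun i => deg e i.1) + w)).2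
  rw [hw] at hLu
  have hall : ∀ i ∈ descendants e s j, i ∈ L := fun i _ =>
    mem_of_validSeq_of_unstable hL (hLu ▸ hu.1) (by simp)
  obtain ⟨i, hi, hsum⟩ := exists_sum_le_applySeq hL ⟨j, self_mem_descendants j⟩ hall
  rw [hLu, Finset.sum_congr rfl fun k _ => hsym k.1 i.1] at hsum
  have hdeg := deg_eq_sum_descendants_add hsym htree hp hi
  have hstab := hu.1 i
  unfold Primed
  split_ifs at hdeg with hij
  · subst hij
    omega
  · omega

theorem reach_sum_single {j : {i : V // i ≠ s}} {a : {i : V // i ≠ s} → ℕ}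
    (C : Finset {i : V // i ≠ s})
    (hC : ∀ c ∈ C, ∀ y : Conf s, (∀ i ∈ descendants e s c, Primed e s p y i) →
      ReflTransGen (Topple e s) (y + Pi.single c (a c)) (y + Pi.single j (a c)))
    (z : Conf s) (hz : ∀ c ∈ C, ∀ i ∈ descendants e s c, Primed e s p z i) :
    ReflTransGen (Topple e s) (z + ∑ c ∈ C, Pi.single c (a c))
      (z + Pi.single j (∑ c ∈ C, a c)) := by
  induction C using Finset.induction_on generalizing z with
  | empty => simpa using ReflTransGen.refl
  | insert c C hc ih =>
    have h1 := hC c (Finset.mem_insert_self c C) (z + ∑ c ∈ C, Pi.single c (a c))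
      fun i hi => (hz c (Finset.mem_insert_self c C) i hi).mono (by simp)
    have h2 := ih (fun c hc => hC c (Finset.mem_insert_of_mem hc)) (z + Pi.single j (a c))
      fun c hc i hi => (hz c (Finset.mem_insert_of_mem hc) i hi).mono (by simp)
    rw [Finset.sum_insert hc, Finset.sum_insert hc, Pi.single_add,
      show z + (Pi.single c (a c) + ∑ c ∈ C, Pi.single c (a c)) =
        (z + ∑ c ∈ C, Pi.single c (a c)) + Pi.single c (a c) by abel, ← add_assoc]
    refine h1.trans ?_
    rwa [add_right_comm]

theorem topple_add_single (hsym : ∀ i j : V, e i j = e j i) (htree : (graph e).IsTree)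
    (hp : IsParent e s p) {x : Conf s} {j : {i : V // i ≠ s}} (hxj : Primed e s p x j) :
    Topple e s (x + Pi.single j (e j.1 (p j)))
      (Function.update x j (x j - ∑ c ∈ children p j, e j.1 c.1) +
        grainsAt s (p j) (e j.1 (p j)) + ∑ c ∈ children p j, Pi.single c (e c.1 j.1)) := by
  have hdeg := deg_eq_add_sum_children hsym htree hp j
  unfold Primed at hxj
  refine ⟨j, by simp; omega, ?_⟩
  funext k
  simp only [toppleAt, Pi.add_apply, Finset.sum_apply, grainsAt, Function.update_apply,
    Pi.single_apply, Finset.sum_ite_eq]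
  by_cases hkj : k = j
  · subst hkj
    have hpk : k.1 ≠ p k := (hp k).1.ne
    have hkc : k ∉ children p k := fun h => hpk (mem_children.1 h).symm
    simp only [if_true, if_neg hpk, if_neg hkc]
    omega
  · rw [edge_eq_parent_add_children hsym htree hp hkj]
    split_ifs <;> omega

/-- Every vertex of the subtree of `j` topples once, parents before children. -/
theorem wave (hsym : ∀ i j : V, e i j = e j i) (htree : (graph e).IsTree) (hp : IsParent e s p)
    (j : {i : V // i ≠ s}) (x : Conf s) (hx : ∀ i ∈ descendants e s j, Primed e s p x i) :
    ReflTransGen (Topple e s) (x + Pi.single j (e j.1 (p j)))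
      (x + grainsAt s (p j) (e j.1 (p j))) := by
  have htop := topple_add_single hsym htree hp (hx j (self_mem_descendants j))
  set S := ∑ c ∈ children p j, e j.1 c.1
  set z : Conf s := Function.update x j (x j - S) + grainsAt s (p j) (e j.1 (p j)) with hz
  have hS : S ≤ x j := by
    have := hx j (self_mem_descendants j)
    have := deg_eq_add_sum_children hsym htree hp j
    unfold Primed at *
    omega
  have hwaves := reach_sum_single (j := j) (children p j) (fun c hc y hy => by
      have hpc := mem_children.1 hc
      have := wave hsym htree hp c y hy
      rwa [hpc, grainsAt_of_ne j.2] at this) z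
    fun c hc i hi => by
      obtain ⟨hij, hi⟩ := Finset.mem_erase.1 (descendants_subset_of_mem_children htree hp hc hi)
      exact (hx i hi).mono (by simp [hz, hij])
  have hfinal : z + Pi.single j (∑ c ∈ children p j, e c.1 j.1) =
      x + grainsAt s (p j) (e j.1 (p j)) := by
    have hS' : ∑ c ∈ children p j, e c.1 j.1 = S := Finset.sum_congr rfl fun c _ => hsym _ _
    funext k
    simp only [hz, Pi.add_apply, Function.update_apply, Pi.single_apply]
    split_ifs with hkj
    · subst hkj
      omega
    · rfl
  exact ReflTransGen.head htop (hfinal ▸ hwaves)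
termination_by (descendants e s j).card
decreasing_by
  exact card_descendants_lt htree
    (mem_descendants.1 (Finset.mem_of_mem_erase (children_subset htree hp j hc)))
    (Finset.ne_of_mem_erase (children_subset htree hp j hc))

theorem reach_waves (hsym : ∀ i j : V, e i j = e j i) (htree : (graph e).IsTree)
    (hp : IsParent e s p) {u : Conf s} (hu : ∀ i, Primed e s p u i) (j : {i : V // i ≠ s})
    (k : ℕ) :
    ReflTransGen (Topple e s) (u + Pi.single j (k * e j.1 (p j)))
      (u + grainsAt s (p j) (k * e j.1 (p j))) := by
  induction k with
  | zero => simpa [grainsAt_zero] using ReflTransGen.refl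
  | succ k ih =>
    have h1 := wave hsym htree hp j (u + Pi.single j (k * e j.1 (p j))) fun i _ =>
      (hu i).mono (by simp)
    have h2 := reach_add ih (grainsAt s (p j) (e j.1 (p j)))
    rw [add_one_mul, Pi.single_add, grainsAt_add, ← add_assoc, ← add_assoc]
    exact h1.trans h2

/-- `N` is the product of the multiplicities along the path from `j` to the sink. -/
theorem exists_reach_single (hsym : ∀ i j : V, e i j = e j i) (htree : (graph e).IsTree)
    (hp : IsParent e s p) {u : Conf s} (hu : ∀ i, Primed e s p u i) (j : {i : V // i ≠ s}) :
    ∃ N, 0 < N ∧ ∀ k, ReflTransGen (Topple e s) (u + Pi.single j (k * N)) u := by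
  induction hd : (graph e).dist j.1 s generalizing j with
  | zero => exact absurd hd (by have := (hp j).2; omega)
  | succ n ih =>
    have hpos := Nat.pos_of_ne_zero (edge_parent_ne_zero hsym hp j)
    by_cases hps : p j = s
    · refine ⟨e j.1 (p j), hpos, fun k => ?_⟩
      simpa [hps, grainsAt_sink] using reach_waves hsym htree hp hu j k
    · obtain ⟨N, hN, hreach⟩ := ih ⟨p j, hps⟩ (by
        show (graph e).dist (p j) s = n
        have := (hp j).2
        omega)
      refine ⟨N * e j.1 (p j), Nat.mul_pos hN hpos, fun k => ?_⟩
      have h1 := reach_waves hsym htree hp hu j (k * N)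
      rw [grainsAt_of_ne hps] at h1
      rw [← mul_assoc]
      refine h1.trans ?_
      rw [mul_right_comm]
      exact hreach _

theorem exists_reach (hsym : ∀ i j : V, e i j = e j i) (htree : (graph e).IsTree)
    (hp : IsParent e s p) {u : Conf s} (hu : ∀ i, Primed e s p u i) :
    ∃ N : {i : V // i ≠ s} → ℕ, (∀ j, 0 < N j) ∧
      ∀ m : Conf s, ReflTransGen (Topple e s) (u + fun j => m j * N j) u := by
  choose N hN hreach using exists_reach_single hsym htree hp hu
  refine ⟨N, hN, fun m => ?_⟩
  have key : ∀ T : Finset {i : V // i ≠ s},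
      ReflTransGen (Topple e s) (u + ∑ j ∈ T, Pi.single j (m j * N j)) u := by
    intro T
    induction T using Finset.induction_on with
    | empty => simpa using ReflTransGen.refl
    | insert a T ha ih =>
      rw [Finset.sum_insert ha, ← add_assoc]
      exact (reach_add (hreach a (m a)) _).trans ih
  simpa only [Finset.univ_sum_single] using key Finset.univ

theorem recurrent_of_primed (hsym : ∀ i j : V, e i j = e j i) (htree : (graph e).IsTree)
    (hp : IsParent e s p) {σ : Conf s → Conf s} (hσ : IsStabilization e s σ) {u : Conf s}
    (hstab : Stable e s u) (hu : ∀ i, Primed e s p u i) : Recurrent e s σ u := by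
  obtain ⟨N, hN, hreach⟩ := exists_reach hsym htree hp hu
  refine ⟨hstab, fun v => ⟨u + fun j => v j * (N j - 1), stabilization_eq hσ ?_ hstab⟩⟩
  convert hreach v using 1
  funext j
  have := Nat.le_mul_of_pos_right (v j) (hN j)
  simp only [Pi.add_apply, Nat.mul_sub_one]
  omega

theorem recurrent_iff (hsym : ∀ i j : V, e i j = e j i) (htree : (graph e).IsTree)
    (hp : IsParent e s p) {σ : Conf s → Conf s} (hσ : IsStabilization e s σ) {u : Conf s} :
    Recurrent e s σ u ↔ Stable e s u ∧ ∀ i, Primed e s p u i :=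
  ⟨fun hu => ⟨hu.1, primed_of_recurrent hsym htree hp hσ hu⟩,
    fun hu => recurrent_of_primed hsym htree hp hσ hu.1 hu.2⟩

end Recurrence

theorem eq_of_natCast_eq_of_window {m d a b : ℕ} (ha : a < d) (ha' : d ≤ a + m) (hb : b < d)
    (hb' : d ≤ b + m) (h : (a : ZMod m) = b) : a = b :=
  ((ZMod.natCast_eq_natCast_iff a b m).1 h).eq_of_abs_lt (by rw [abs_lt]; omega)

section Bijection

variable {V : Type*} [Fintype V] [DecidableEq V] {e : V → V → ℕ} {s : V}
  {p : {i : V // i ≠ s} → V}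

theorem phi_apply_eq_add_sum (u : Conf s) (j : {i : V // i ≠ s}) :
    phi e s p u j = u j + ∑ i ∈ (descendants e s j).erase j, (u i : ZMod (e j.1 (p j))) :=
  (Finset.add_sum_erase _ _ (self_mem_descendants j)).symm

theorem phi_injOn (htree : (graph e).IsTree) :
    Set.InjOn (phi e s p) {u | Stable e s u ∧ ∀ i, Primed e s p u i} := by
  intro u hu v hv huv
  by_contra hne
  obtain ⟨j, hj, hmin⟩ := (Finset.univ.filter fun j => u j ≠ v j).exists_min_image
    (fun j => (descendants e s j).card)
    (by simpa [Finset.filter_nonempty_iff] using Function.ne_iff.1 hne)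
  have hdesc : ∀ i ∈ (descendants e s j).erase j, u i = v i := fun i hi => by
    obtain ⟨hij, hi⟩ := Finset.mem_erase.1 hi
    by_contra h
    exact absurd (hmin i (by simpa using h))
      (not_le.2 (card_descendants_lt htree (mem_descendants.1 hi) hij))
  have hj' := congrFun huv j
  rw [phi_apply_eq_add_sum, phi_apply_eq_add_sum,
    Finset.sum_congr rfl fun i hi => by rw [hdesc i hi], add_left_inj] at hj'
  exact (Finset.mem_filter.1 hj).2
    (eq_of_natCast_eq_of_window (hu.1 j) (hu.2 j) (hv.1 j) (hv.2 j) hj')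

theorem phi_surjOn (hsym : ∀ i j : V, e i j = e j i) (htree : (graph e).IsTree)
    (hp : IsParent e s p) :
    Set.SurjOn (phi e s p) {u | Stable e s u ∧ ∀ i, Primed e s p u i} Set.univ := by
  have : ∀ j, NeZero (e j.1 (p j)) := fun j => ⟨edge_parent_ne_zero hsym hp j⟩
  let W : Finset (Conf s) :=
    Fintype.piFinset fun j => Finset.Ico (deg e j.1 - e j.1 (p j)) (deg e j.1)
  have hW : (W : Set (Conf s)) = {u | Stable e s u ∧ ∀ i, Primed e s p u i} := by
    ext u
    simp only [W, Fintype.coe_piFinset, Set.mem_pi, Set.mem_univ, Finset.mem_coe,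
      Finset.mem_Ico, true_implies, Stable, Primed]
    exact ⟨fun h => ⟨fun j => (h j).2, fun j => by have := h j; omega⟩,
      fun h j => ⟨by have := h.2 j; omega, h.1 j⟩⟩
  rw [← hW, ← Finset.coe_univ]
  refine Finset.surjOn_of_injOn_of_card_le _ (fun _ _ => Finset.mem_coe.2 (Finset.mem_univ _))
    (hW ▸ phi_injOn htree) ?_
  rw [Finset.card_univ, Fintype.card_pi, Fintype.card_piFinset]
  refine (Finset.prod_congr rfl fun j _ => ?_).le
  rw [ZMod.card, Nat.card_Ico, Nat.sub_sub_self (edge_le_deg _ _)]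

end Bijection

variable {V : Type*} [Fintype V] [DecidableEq V]

theorem stmt_5 (e : V → V → ℕ) (s : V) (hsym : ∀ i j : V, e i j = e j i)
    (htree : (graph e).IsTree)
    (p : {i : V // i ≠ s} → V) (hp : IsParent e s p)
    (σ : Conf s → Conf s) (hσ : IsStabilization e s σ) :
    Set.BijOn (phi e s p) {u | Recurrent e s σ u} Set.univ ∧
    (∀ u v : Conf s, Recurrent e s σ u → Recurrent e s σ v →
      phi e s p (σ (u + v)) = phi e s p u + phi e s p v) := by
  have hrec : {u | Recurrent e s σ u} = {u | Stable e s u ∧ ∀ i, Primed e s p u i} :=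
    Set.ext fun _ => recurrent_iff hsym htree hp hσ
  refine ⟨?_, fun u v _ _ => by rw [phi_stabilization hsym htree hp hσ, phi_add]⟩
  rw [hrec]
  exact ⟨Set.mapsTo_univ _ _, phi_injOn htree, phi_surjOn hsym htree hp⟩

end SandpilePaper
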